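/- Let α be a real number with 0 < α < π. Then the function ξ ↦ F̃(ξ,α) is strictly decreasing on (0,∞): for all real ξ₁, ξ₂ with 0 < ξ₁ < ξ₂, one has F̃(ξ₂,α) < F̃(ξ₁,α). -/

import Mathlib

open Real

/-- The hyperbolic dispersion function of the corner transmission problem. -/
noncomputable def Ftilde (ξ α : ℝ) : ℝ :=
  Real.sinh (α * ξ) * Real.sinh ((2 * Real.pi - α) * ξ) /
    (1 - Real.cosh (α * ξ) * Real.cosh ((2 * Real.pi - α) * ξ))

/-!
Writing `αξ = πξ - (π - α)ξ` and `(2π - α)ξ = πξ + (π - α)ξ`, the addition formulas turn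
`F̃(ξ, α)` into `(r² - 1) / (r² + 1)` with `r = sinh((π - α)ξ) / sinh(πξ)`. This is increasing in
`r ≥ 0`, so it suffices that `r` decreases in `ξ`. The logarithmic derivative of `r` is
`(φ(qξ) - φ(πξ)) / ξ` with `q = π - α < π` and `φ(x) = x coth x`, and `φ` is increasing on
`(0, ∞)` because `φ'(x) = (sinh 2x - 2x) / (2 sinh² x) > 0`.
-/

open Set

namespace Real

lemma sinh_sub_mul_sinh_add (a b : ℝ) : sinh (a - b) * sinh (a + b) = sinh a ^ 2 - sinh b ^ 2 := by
  rw [sinh_sub, sinh_add]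
  linear_combination sinh a ^ 2 * cosh_sq_sub_sinh_sq b - sinh b ^ 2 * cosh_sq_sub_sinh_sq a

lemma cosh_sub_mul_cosh_add (a b : ℝ) :
    cosh (a - b) * cosh (a + b) = 1 + (sinh a ^ 2 + sinh b ^ 2) := by
  rw [cosh_sub, cosh_add]
  linear_combination cosh b ^ 2 * cosh_sq_sub_sinh_sq a + (sinh a ^ 2 + 1) * cosh_sq_sub_sinh_sq b

lemma strictMonoOn_mul_cosh_div_sinh : StrictMonoOn (fun x => x * cosh x / sinh x) (Ioi 0) := by
  refine strictMonoOn_of_deriv_pos (convex_Ioi 0) ?_ fun x hx => ?_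
  · exact fun x hx => ((continuous_id.mul continuous_cosh).continuousAt.div
      continuous_sinh.continuousAt (sinh_pos_iff.2 hx).ne').continuousWithinAt
  rw [interior_Ioi, mem_Ioi] at hx
  have hsinh : 0 < sinh x := sinh_pos_iff.2 hx
  have hderiv : HasDerivAt (fun x => x * cosh x / sinh x)
      (((1 * cosh x + x * sinh x) * sinh x - x * cosh x * cosh x) / sinh x ^ 2) x :=
    ((hasDerivAt_id x).mul (hasDerivAt_cosh x)).div (hasDerivAt_sinh x) hsinh.ne'
  rw [hderiv.deriv]
  -- the numerator is `sinh x * cosh x - x = (sinh (2 * x) - 2 * x) / 2`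
  have h2x : 2 * x < sinh (2 * x) := self_lt_sinh_iff.2 (by positivity)
  have hpyth : cosh x ^ 2 - sinh x ^ 2 = 1 := cosh_sq_sub_sinh_sq x
  rw [sinh_two_mul] at h2x
  apply div_pos _ (by positivity)
  nlinarith

lemma strictAntiOn_sinh_mul_div_sinh_mul {p q : ℝ} (hq : 0 < q) (hqp : q < p) :
    StrictAntiOn (fun x => sinh (q * x) / sinh (p * x)) (Ioi 0) := by
  have hp : 0 < p := hq.trans hqp
  refine strictAntiOn_of_deriv_neg (convex_Ioi 0) ?_ fun x hx => ?_
  · exact fun x hx => ((continuous_sinh.comp (continuous_const_mul q)).continuousAt.div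
      (continuous_sinh.comp (continuous_const_mul p)).continuousAt
      (sinh_pos_iff.2 (mul_pos hp hx)).ne').continuousWithinAt
  rw [interior_Ioi, mem_Ioi] at hx
  have hqx : 0 < sinh (q * x) := sinh_pos_iff.2 (mul_pos hq hx)
  have hpx : 0 < sinh (p * x) := sinh_pos_iff.2 (mul_pos hp hx)
  have hderiv : HasDerivAt (fun x => sinh (q * x) / sinh (p * x))
      ((cosh (q * x) * q * sinh (p * x) - sinh (q * x) * (cosh (p * x) * p)) /
        sinh (p * x) ^ 2) x := by
    have hlin (c : ℝ) : HasDerivAt (fun x => c * x) c x := by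
      simpa using (hasDerivAt_id x).const_mul c
    exact (hlin q).sinh.div (hlin p).sinh hpx.ne'
  rw [hderiv.deriv]
  have hcoth := strictMonoOn_mul_cosh_div_sinh (mem_Ioi.2 (mul_pos hq hx))
    (mem_Ioi.2 (mul_pos hp hx)) (mul_lt_mul_of_pos_right hqp hx)
  rw [div_lt_div_iff₀ hqx hpx] at hcoth
  apply div_neg_of_neg_of_pos _ (by positivity)
  nlinarith

end Real

lemma strictMonoOn_sq_sub_one_div_sq_add_one {K : Type*} [Field K] [LinearOrder K]
    [IsStrictOrderedRing K] : StrictMonoOn (fun t : K => (t ^ 2 - 1) / (t ^ 2 + 1)) (Ici 0) := by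
  intro a ha b hb hab
  rw [div_lt_div_iff₀ (by positivity) (by positivity)]
  nlinarith [mul_lt_mul'' hab hab ha ha]

lemma Ftilde_eq_sinh_ratio {ξ : ℝ} (hξ : ξ ≠ 0) (α : ℝ) :
    Ftilde ξ α = ((sinh ((π - α) * ξ) / sinh (π * ξ)) ^ 2 - 1) /
      ((sinh ((π - α) * ξ) / sinh (π * ξ)) ^ 2 + 1) := by
  have hs : sinh (π * ξ) ≠ 0 := sinh_ne_zero.2 (mul_ne_zero pi_ne_zero hξ)
  have hα : α * ξ = π * ξ - (π - α) * ξ := by ring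
  have hα' : (2 * π - α) * ξ = π * ξ + (π - α) * ξ := by ring
  rw [Ftilde, hα, hα', sinh_sub_mul_sinh_add, cosh_sub_mul_cosh_add, sub_add_cancel_left]
  have hden : sinh (π * ξ) ^ 2 + sinh ((π - α) * ξ) ^ 2 ≠ 0 := by positivity
  field_simp
  ring

theorem hyperbolic_dispersion_strictAnti
    (α : ℝ) (hα0 : 0 < α) (hαπ : α < Real.pi)
    (ξ₁ ξ₂ : ℝ) (h0 : 0 < ξ₁) (h12 : ξ₁ < ξ₂) :
    Ftilde ξ₂ α < Ftilde ξ₁ α := by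
  have hq : 0 < π - α := sub_pos.2 hαπ
  have hξ₂ : 0 < ξ₂ := h0.trans h12
  have ratio_nonneg {ξ : ℝ} (hξ : 0 < ξ) : sinh ((π - α) * ξ) / sinh (π * ξ) ∈ Ici 0 :=
    div_nonneg (sinh_nonneg_iff.2 (mul_pos hq hξ).le) (sinh_nonneg_iff.2 (mul_pos pi_pos hξ).le)
  rw [Ftilde_eq_sinh_ratio h0.ne', Ftilde_eq_sinh_ratio hξ₂.ne']
  exact strictMonoOn_sq_sub_one_div_sq_add_one (ratio_nonneg hξ₂) (ratio_nonneg h0)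
    (strictAntiOn_sinh_mul_div_sinh_mul hq (sub_lt_self π hα0) h0 hξ₂ h12)
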